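/- Let D ⊆ ℂ^d be a convex domain and let v ∈ ℂ^d be a unit vector such that, regarding D as a convex subset of ℝ^{2d}, the set of directions at infinity of D is exactly {v, −v}. Then for every z₀ ∈ D there exists A ≥ 1 such that (1/A)(b − a) ≤ K_D(z₀ + a·v, z₀ + b·v) ≤ A(b − a) for all real numbers a ≤ b; that is, the curve t ↦ z₀ + t·v is an (A,0)-quasi-geodesic for K_D. -/

import Mathlib

open Set Metric Filter

noncomputable section

/-- Inverse hyperbolic tangent, `artanh x = (1/2) log((1+x)/(1-x))`. -/
def artanh (x : ℝ) : ℝ := Real.log ((1 + x) / (1 - x)) / 2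

/-- The Poincaré distance on the unit disc `𝔻 ⊆ ℂ`:
`ρ(a,b) = artanh |(a − b)/(1 − conj(a)·b)|`. -/
def poincareDist (a b : ℂ) : ℝ :=
  artanh ‖(a - b) / (1 - (starRingEnd ℂ) a * b)‖

/-- The Kobayashi pseudodistance on a domain `D ⊆ ℂ^d`: the infimum of `Σ ρ(aᵢ,bᵢ)` over all
finite chains of holomorphic maps `fᵢ : 𝔻 → D` with `f₁(a₁) = x`, `fᵢ(bᵢ) = fᵢ₊₁(aᵢ₊₁)` and
`f_N(b_N) = y`. -/
def kobayashiDist {d : ℕ} (D : Set (EuclideanSpace ℂ (Fin d)))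
    (x y : EuclideanSpace ℂ (Fin d)) : ℝ :=
  sInf {c : ℝ | ∃ (N : ℕ) (f : Fin (N + 1) → ℂ → EuclideanSpace ℂ (Fin d))
      (a b : Fin (N + 1) → ℂ),
    (∀ i, DifferentiableOn ℂ (f i) (Metric.ball (0 : ℂ) 1)) ∧
    (∀ i, Set.MapsTo (f i) (Metric.ball (0 : ℂ) 1) D) ∧
    (∀ i, a i ∈ Metric.ball (0 : ℂ) 1) ∧ (∀ i, b i ∈ Metric.ball (0 : ℂ) 1) ∧
    f 0 (a 0) = x ∧ f (Fin.last N) (b (Fin.last N)) = y ∧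
    (∀ i : Fin N, f (Fin.castSucc i) (b (Fin.castSucc i)) = f (Fin.succ i) (a (Fin.succ i))) ∧
    c = ∑ i, poincareDist (a i) (b i)}

/-- A domain `D ⊆ ℂ^d` is ℂ-proper if it contains no complex affine line. -/
def CProper {d : ℕ} (D : Set (EuclideanSpace ℂ (Fin d))) : Prop :=
  ¬ ∃ (z v : EuclideanSpace ℂ (Fin d)), v ≠ 0 ∧ ∀ t : ℂ, z + t • v ∈ D

/-- The set of directions at infinity of `D ⊆ ℂ^d ≅ ℝ^{2d}`: unit vectors `u` such that some
real ray `x + ℝ≥0 • u` starting in `D` stays in `D`. -/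
def directionsAtInfinity {d : ℕ} (D : Set (EuclideanSpace ℂ (Fin d))) :
    Set (EuclideanSpace ℂ (Fin d)) :=
  {u | ‖u‖ = 1 ∧ ∃ x ∈ D, ∀ t : ℝ, 0 ≤ t → x + t • u ∈ D}

/-!
Since `±v` are directions at infinity of the open convex set `D`, every real line parallel to
`v` through a point of `D` lies in `D`. As these are the only directions, `Im ⟪v, ·⟫` is bounded on
`D`, by `M` say: otherwise normalised far-away points of `D` with `Re ⟪v, · - z₀⟫ = 0` would
accumulate at a further direction. Composing a holomorphic disc in `D` with
`exp (π ⟪v, ·⟫ / (2M))`, which lands in the right half-plane, and with the Cayley transform,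
Schwarz–Pick shows that `(π / 4M) |Re ⟪v, y - x⟫|` is at most the Kobayashi distance: the lower
bound. Conversely, convexity and openness put a strip `|Im w| < δ` into the complex slice
`{w | z₀ + w v ∈ D}`, and `ζ ↦ (2δ/π) log ((1 + ζ)/(1 - ζ))` maps the disc onto that strip and its
real diameter onto the real line: the upper bound.
-/

open ComplexConjugate Topology

lemma artanh_eq_real_artanh {x : ℝ} (hx : x ∈ Icc (-1) 1) : artanh x = Real.artanh x := by
  rw [Real.artanh_eq_half_log hx, artanh]
  ring

lemma artanh_le_artanh {x y : ℝ} (hx : -1 < x) (hy : y < 1) (hxy : x ≤ y) :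
    artanh x ≤ artanh y := by
  rw [artanh_eq_real_artanh ⟨hx.le, hxy.trans hy.le⟩,
    artanh_eq_real_artanh ⟨hx.le.trans hxy, hy.le⟩]
  exact Real.artanh_le_artanh hx hy hxy

lemma artanh_sub_div_add {x y : ℝ} (hx : 0 < x) (hy : 0 < y) :
    artanh ((x - y) / (x + y)) = (Real.log x - Real.log y) / 2 := by
  have hxy : x + y ≠ 0 := by positivity
  have h : (1 + (x - y) / (x + y)) / (1 - (x - y) / (x + y)) = x / y := by
    rw [one_add_div hxy, one_sub_div hxy, div_div_div_cancel_right₀ hxy]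
    ring_nf
  rw [artanh, h, Real.log_div hx.ne' hy.ne']

/-- The automorphism of the unit disc sending `a` to `0`. -/
def mobius (a z : ℂ) : ℂ := (z - a) / (1 - conj a * z)

section Mobius

variable {a b z : ℂ}

lemma normSq_one_sub_conj_mul_sub_normSq_sub (a z : ℂ) :
    Complex.normSq (1 - conj a * z) - Complex.normSq (z - a)
      = (1 - Complex.normSq a) * (1 - Complex.normSq z) := by
  simp only [Complex.normSq_apply, Complex.sub_re, Complex.sub_im, Complex.mul_re,
    Complex.mul_im, Complex.conj_re, Complex.conj_im, Complex.one_re, Complex.one_im]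
  ring

lemma one_sub_conj_mul_ne_zero (ha : ‖a‖ < 1) (hz : ‖z‖ < 1) : 1 - conj a * z ≠ 0 := by
  refine sub_ne_zero.2 fun h => ?_
  have h1 := congrArg norm h
  rw [norm_one, norm_mul, Complex.norm_conj] at h1
  nlinarith [norm_nonneg a, norm_nonneg z]

lemma norm_mobius_lt_one (ha : ‖a‖ < 1) (hz : ‖z‖ < 1) : ‖mobius a z‖ < 1 := by
  have hden := one_sub_conj_mul_ne_zero ha hz
  rw [mobius, norm_div, div_lt_one (norm_pos_iff.2 hden), ← sq_lt_sq₀ (norm_nonneg _)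
    (norm_nonneg _), Complex.sq_norm, Complex.sq_norm, ← sub_pos,
    normSq_one_sub_conj_mul_sub_normSq_sub, ← Complex.sq_norm, ← Complex.sq_norm]
  exact mul_pos (by nlinarith [norm_nonneg a]) (by nlinarith [norm_nonneg z])

lemma mobius_mem_ball (ha : a ∈ ball (0 : ℂ) 1) (hz : z ∈ ball (0 : ℂ) 1) :
    mobius a z ∈ ball (0 : ℂ) 1 :=
  mem_ball_zero_iff.2 (norm_mobius_lt_one (mem_ball_zero_iff.1 ha) (mem_ball_zero_iff.1 hz))

lemma mobius_neg_mobius (ha : ‖a‖ < 1) (hz : ‖z‖ < 1) : mobius (-a) (mobius a z) = z := by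
  have hq := one_sub_conj_mul_ne_zero ha hz
  have e1 : (z - a) / (1 - conj a * z) - -a = z * (1 - conj a * a) / (1 - conj a * z) := by
    rw [eq_div_iff hq, sub_neg_eq_add, add_mul, div_mul_cancel₀ _ hq]
    ring
  have e2 : 1 - conj (-a) * ((z - a) / (1 - conj a * z))
      = (1 - conj a * a) / (1 - conj a * z) := by
    rw [eq_div_iff hq, map_neg, sub_mul, one_mul, neg_mul, neg_mul, mul_assoc,
      div_mul_cancel₀ _ hq]
    ring
  rw [mobius, mobius, e1, e2, div_div_div_cancel_right₀ hq, mul_div_assoc,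
    div_self (one_sub_conj_mul_ne_zero ha ha), mul_one]

lemma differentiableOn_mobius (ha : ‖a‖ < 1) : DifferentiableOn ℂ (mobius a) (ball 0 1) :=
  DifferentiableOn.div (by fun_prop) (by fun_prop) fun _ hz =>
    one_sub_conj_mul_ne_zero ha (mem_ball_zero_iff.1 hz)

/-- The Schwarz–Pick lemma. -/
lemma norm_mobius_le_of_mapsTo_ball {G : ℂ → ℂ} (hd : DifferentiableOn ℂ G (ball 0 1))
    (hm : MapsTo G (ball 0 1) (ball 0 1)) (ha : a ∈ ball (0 : ℂ) 1) (hb : b ∈ ball (0 : ℂ) 1) :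
    ‖mobius (G a) (G b)‖ ≤ ‖mobius a b‖ := by
  have ha' := mem_ball_zero_iff.1 ha
  have hna : -a ∈ ball (0 : ℂ) 1 := by simpa using ha
  have hinv : MapsTo (mobius (-a)) (ball 0 1) (ball 0 1) := fun _ hz => mobius_mem_ball hna hz
  have hH : DifferentiableOn ℂ (mobius (G a) ∘ G ∘ mobius (-a)) (ball 0 1) :=
    (differentiableOn_mobius (mem_ball_zero_iff.1 (hm ha))).comp
      (hd.comp (differentiableOn_mobius (mem_ball_zero_iff.1 hna)) hinv) (hm.comp hinv)
  have hHmaps : MapsTo (mobius (G a) ∘ G ∘ mobius (-a)) (ball 0 1) (closedBall 0 1) :=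
    fun _ hz => ball_subset_closedBall (mobius_mem_ball (hm ha) (hm (hinv hz)))
  have hH0 : (mobius (G a) ∘ G ∘ mobius (-a)) 0 = 0 := by simp [mobius]
  have key := Complex.norm_le_norm_of_mapsTo_ball hH hHmaps hH0
    (mem_ball_zero_iff.1 (mobius_mem_ball ha hb))
  rwa [Function.comp_apply, Function.comp_apply,
    mobius_neg_mobius ha' (mem_ball_zero_iff.1 hb)] at key

lemma poincareDist_eq_artanh_norm_mobius (a b : ℂ) : poincareDist a b = artanh ‖mobius a b‖ := by
  rw [poincareDist, mobius, norm_div, norm_div, norm_sub_rev]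

lemma poincareDist_comm (a b : ℂ) : poincareDist a b = poincareDist b a := by
  have h : ‖1 - conj a * b‖ = ‖1 - conj b * a‖ := by
    rw [← Complex.norm_conj, map_sub, map_one, map_mul, Complex.conj_conj, mul_comm]
  rw [poincareDist, poincareDist, norm_div, norm_div, norm_sub_rev, h]

lemma poincareDist_nonneg (ha : a ∈ ball (0 : ℂ) 1) (hb : b ∈ ball (0 : ℂ) 1) :
    0 ≤ poincareDist a b := by
  have h := norm_mobius_lt_one (mem_ball_zero_iff.1 ha) (mem_ball_zero_iff.1 hb)
  have h0 := norm_nonneg (mobius a b)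
  rw [poincareDist_eq_artanh_norm_mobius, artanh_eq_real_artanh ⟨by linarith, h.le⟩]
  exact Real.artanh_nonneg h0

lemma poincareDist_le_of_mapsTo_ball {G : ℂ → ℂ} (hd : DifferentiableOn ℂ G (ball 0 1))
    (hm : MapsTo G (ball 0 1) (ball 0 1)) (ha : a ∈ ball (0 : ℂ) 1) (hb : b ∈ ball (0 : ℂ) 1) :
    poincareDist (G a) (G b) ≤ poincareDist a b := by
  rw [poincareDist_eq_artanh_norm_mobius, poincareDist_eq_artanh_norm_mobius]
  exact artanh_le_artanh (by linarith [norm_nonneg (mobius (G a) (G b))])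
    (norm_mobius_lt_one (mem_ball_zero_iff.1 ha) (mem_ball_zero_iff.1 hb))
    (norm_mobius_le_of_mapsTo_ball hd hm ha hb)

end Mobius

/-- The Cayley transform, mapping the right half-plane onto the unit disc. -/
def cayley (p : ℂ) : ℂ := (p - 1) / (p + 1)

section Cayley

variable {p q : ℂ}

lemma add_ne_zero_of_re_pos (hp : 0 < p.re) (hq : 0 < q.re) : p + q ≠ 0 := fun h => by
  have h' := congrArg Complex.re h
  rw [Complex.add_re, Complex.zero_re] at h'
  linarith

lemma norm_cayley_lt_one (hp : 0 < p.re) : ‖cayley p‖ < 1 := by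
  rw [cayley, norm_div, div_lt_one (norm_pos_iff.2 (add_ne_zero_of_re_pos hp (by norm_num))),
    ← sq_lt_sq₀ (norm_nonneg _) (norm_nonneg _), Complex.sq_norm, Complex.sq_norm]
  simp only [Complex.normSq_apply, Complex.sub_re, Complex.sub_im, Complex.add_re,
    Complex.add_im, Complex.one_re, Complex.one_im]
  nlinarith

lemma norm_mobius_cayley (hp : 0 < p.re) (hq : 0 < q.re) :
    ‖mobius (cayley p) (cayley q)‖ = ‖q - p‖ / ‖conj p + q‖ := by
  have hcp : 0 < (conj p).re := by rwa [Complex.conj_re]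
  have hp1 : p + 1 ≠ 0 := add_ne_zero_of_re_pos hp (by norm_num)
  have hq1 : q + 1 ≠ 0 := add_ne_zero_of_re_pos hq (by norm_num)
  have hcp1 : conj p + 1 ≠ 0 := add_ne_zero_of_re_pos hcp (by norm_num)
  have hpq := add_ne_zero_of_re_pos hcp hq
  have key : mobius (cayley p) (cayley q) = (q - p) * (conj p + 1) / ((p + 1) * (conj p + q)) := by
    have hden := one_sub_conj_mul_ne_zero (norm_cayley_lt_one hp) (norm_cayley_lt_one hq)
    rw [mobius, div_eq_div_iff hden (mul_ne_zero hp1 hpq), cayley, cayley, map_div₀, map_sub,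
      map_add, map_one]
    field_simp
    ring
  have hnorm : ‖conj p + 1‖ = ‖p + 1‖ := by
    rw [← Complex.norm_conj, map_add, map_one, Complex.conj_conj]
  rw [key, norm_div, norm_mul, norm_mul, hnorm, mul_comm ‖p + 1‖,
    mul_div_mul_right _ _ (norm_ne_zero_iff.2 hp1)]

lemma log_norm_sub_log_norm_le_poincareDist_cayley (hp : 0 < p.re) (hq : 0 < q.re) :
    (Real.log ‖q‖ - Real.log ‖p‖) / 2 ≤ poincareDist (cayley p) (cayley q) := by
  have hp0 : 0 < ‖p‖ := norm_pos_iff.2 fun h => by simp [h] at hp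
  have hq0 : 0 < ‖q‖ := norm_pos_iff.2 fun h => by simp [h] at hq
  have hpq : 0 < ‖conj p + q‖ :=
    norm_pos_iff.2 (add_ne_zero_of_re_pos (by rwa [Complex.conj_re]) hq)
  have hlt := norm_mobius_lt_one (norm_cayley_lt_one hp) (norm_cayley_lt_one hq)
  rw [← artanh_sub_div_add hq0 hp0, poincareDist_eq_artanh_norm_mobius]
  refine artanh_le_artanh ?_ hlt ?_
  · rw [lt_div_iff₀ (by positivity)]
    linarith
  · rw [norm_mobius_cayley hp hq]
    refine div_le_div₀ (norm_nonneg _) (norm_sub_norm_le q p) hpq ?_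
    calc ‖conj p + q‖ ≤ ‖conj p‖ + ‖q‖ := norm_add_le _ _
      _ = ‖q‖ + ‖p‖ := by rw [Complex.norm_conj, add_comm]

end Cayley

lemma log_norm_sub_log_norm_le_poincareDist {h : ℂ → ℂ} (hd : DifferentiableOn ℂ h (ball 0 1))
    (hre : ∀ ζ ∈ ball (0 : ℂ) 1, 0 < (h ζ).re) {a b : ℂ} (ha : a ∈ ball (0 : ℂ) 1)
    (hb : b ∈ ball (0 : ℂ) 1) :
    (Real.log ‖h b‖ - Real.log ‖h a‖) / 2 ≤ poincareDist a b := by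
  have hG : DifferentiableOn ℂ (cayley ∘ h) (ball 0 1) :=
    (hd.sub_const 1).div (hd.add_const 1) fun ζ hζ => add_ne_zero_of_re_pos (hre ζ hζ) (by norm_num)
  have hGm : MapsTo (cayley ∘ h) (ball 0 1) (ball 0 1) := fun ζ hζ =>
    mem_ball_zero_iff.2 (norm_cayley_lt_one (hre ζ hζ))
  exact (log_norm_sub_log_norm_le_poincareDist_cayley (hre a ha) (hre b hb)).trans
    (poincareDist_le_of_mapsTo_ball hG hGm ha hb)

lemma mul_abs_re_sub_le_poincareDist {g : ℂ → ℂ} {M : ℝ} (hd : DifferentiableOn ℂ g (ball 0 1))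
    (him : ∀ ζ ∈ ball (0 : ℂ) 1, |(g ζ).im| < M) {a b : ℂ} (ha : a ∈ ball (0 : ℂ) 1)
    (hb : b ∈ ball (0 : ℂ) 1) :
    Real.pi / (4 * M) * |(g b).re - (g a).re| ≤ poincareDist a b := by
  have hM : 0 < M := (abs_nonneg _).trans_lt (him a ha)
  set c : ℝ := Real.pi / (2 * M)
  have hre : ∀ ζ ∈ ball (0 : ℂ) 1, 0 < (Complex.exp (c * g ζ)).re := by
    intro ζ hζ
    rw [Complex.exp_re, Complex.im_ofReal_mul]
    refine mul_pos (Real.exp_pos _) (Real.cos_pos_of_mem_Ioo (abs_lt.1 ?_))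
    calc |c * (g ζ).im| = c * |(g ζ).im| := by rw [abs_mul, abs_of_pos (by positivity)]
      _ < c * M := by gcongr; exact him ζ hζ
      _ = Real.pi / 2 := by simp only [c]; field_simp
  have hlog : ∀ ζ, Real.log ‖Complex.exp (c * g ζ)‖ = c * (g ζ).re := fun ζ => by
    rw [Complex.norm_exp, Real.log_exp, Complex.re_ofReal_mul]
  have key : ∀ x ∈ ball (0 : ℂ) 1, ∀ y ∈ ball (0 : ℂ) 1,
      Real.pi / (4 * M) * ((g y).re - (g x).re) ≤ poincareDist x y := by
    intro x hx y hy
    have h := log_norm_sub_log_norm_le_poincareDist (by fun_prop) hre hx hy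
    rw [hlog, hlog] at h
    calc Real.pi / (4 * M) * ((g y).re - (g x).re) = (c * (g y).re - c * (g x).re) / 2 := by
          ring
      _ ≤ poincareDist x y := h
  rcases abs_cases ((g b).re - (g a).re) with ⟨h, -⟩ | ⟨h, -⟩ <;> rw [h]
  · exact key a ha b hb
  · rw [poincareDist_comm, neg_sub]
    exact key b hb a ha

lemma Fin.sum_sub_eq_of_chain {G : Type*} [AddCommGroup G] {N : ℕ} (s t : Fin (N + 1) → G)
    (h : ∀ i : Fin N, t i.castSucc = s i.succ) : ∑ i, (t i - s i) = t (Fin.last N) - s 0 := by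
  rw [Finset.sum_sub_distrib, Fin.sum_univ_castSucc, Fin.sum_univ_succ (f := s)]
  simp only [h]
  abel

section Kobayashi

variable {d : ℕ} {D : Set (EuclideanSpace ℂ (Fin d))} {f : ℂ → EuclideanSpace ℂ (Fin d)} {a b : ℂ}

lemma kobayashiDist_le_poincareDist (hf : DifferentiableOn ℂ f (ball 0 1))
    (hfD : MapsTo f (ball 0 1) D) (ha : a ∈ ball (0 : ℂ) 1) (hb : b ∈ ball (0 : ℂ) 1) :
    kobayashiDist D (f a) (f b) ≤ poincareDist a b := by
  refine csInf_le ⟨0, ?_⟩ ⟨0, fun _ => f, fun _ => a, fun _ => b, fun _ => hf, fun _ => hfD,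
    fun _ => ha, fun _ => hb, rfl, rfl, fun i => i.elim0, by simp⟩
  rintro c ⟨N, g, a', b', -, -, ha', hb', -, -, -, rfl⟩
  exact Finset.sum_nonneg fun i _ => poincareDist_nonneg (ha' i) (hb' i)

lemma abs_sub_le_kobayashiDist {φ : EuclideanSpace ℂ (Fin d) → ℝ}
    (hφ : ∀ g : ℂ → EuclideanSpace ℂ (Fin d), DifferentiableOn ℂ g (ball 0 1) →
      MapsTo g (ball 0 1) D → ∀ a ∈ ball (0 : ℂ) 1, ∀ b ∈ ball (0 : ℂ) 1,
        |φ (g b) - φ (g a)| ≤ poincareDist a b)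
    (hf : DifferentiableOn ℂ f (ball 0 1)) (hfD : MapsTo f (ball 0 1) D)
    (ha : a ∈ ball (0 : ℂ) 1) (hb : b ∈ ball (0 : ℂ) 1) :
    |φ (f b) - φ (f a)| ≤ kobayashiDist D (f a) (f b) := by
  refine le_csInf ⟨_, 0, fun _ => f, fun _ => a, fun _ => b, fun _ => hf, fun _ => hfD,
    fun _ => ha, fun _ => hb, rfl, rfl, fun i => i.elim0, rfl⟩ ?_
  rintro c ⟨N, g, a', b', hg, hgD, ha', hb', hx, hy, hchain, rfl⟩
  calc |φ (f b) - φ (f a)|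
        = |∑ i, (φ (g i (b' i)) - φ (g i (a' i)))| := by
          rw [Fin.sum_sub_eq_of_chain _ _ fun i => congrArg φ (hchain i), hx, hy]
    _ ≤ ∑ i, |φ (g i (b' i)) - φ (g i (a' i))| := Finset.abs_sum_le_sum_abs _ _
    _ ≤ ∑ i, poincareDist (a' i) (b' i) :=
        Finset.sum_le_sum fun i _ => hφ _ (hg i) (hgD i) _ (ha' i) _ (hb' i)

lemma mul_abs_re_sub_le_kobayashiDist (ℓ : EuclideanSpace ℂ (Fin d) →L[ℂ] ℂ) {M : ℝ}
    (hM : ∀ z ∈ D, |(ℓ z).im| < M) (hf : DifferentiableOn ℂ f (ball 0 1))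
    (hfD : MapsTo f (ball 0 1) D) (ha : a ∈ ball (0 : ℂ) 1) (hb : b ∈ ball (0 : ℂ) 1) :
    Real.pi / (4 * M) * |(ℓ (f b)).re - (ℓ (f a)).re| ≤ kobayashiDist D (f a) (f b) := by
  have hM0 : 0 < M := (abs_nonneg _).trans_lt (hM _ (hfD ha))
  have h := abs_sub_le_kobayashiDist (φ := fun z => Real.pi / (4 * M) * (ℓ z).re)
    (fun g hg hgD z hz w hw => ?_) hf hfD ha hb
  · rwa [← mul_sub, abs_mul, abs_of_pos (by positivity)] at h
  · rw [← mul_sub, abs_mul, abs_of_pos (by positivity)]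
    exact mul_abs_re_sub_le_poincareDist (g := ℓ ∘ g) (ℓ.differentiable.comp_differentiableOn hg)
      (fun ζ hζ => hM _ (hgD hζ)) hz hw

end Kobayashi

section Convex

variable {E : Type*} [NormedAddCommGroup E] [NormedSpace ℝ E] {D : Set E} {x u : E}

lemma Convex.add_smul_mem_closure_of_tendsto (hD : Convex ℝ D) (hx : x ∈ D) {y : ℕ → E}
    {r : ℕ → ℝ} (hy : ∀ n, y n ∈ D) (hr : Tendsto r atTop atTop)
    (hu : Tendsto (fun n => (r n)⁻¹ • (y n - x)) atTop (𝓝 u)) {t : ℝ} (ht : 0 ≤ t) :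
    x + t • u ∈ closure D := by
  refine mem_closure_of_tendsto ((hu.const_smul t).const_add x) ?_
  filter_upwards [hr.eventually_ge_atTop (max t 1)] with n hn
  have hr0 : 0 < r n := one_pos.trans_le ((le_max_right _ _).trans hn)
  rw [smul_smul]
  refine hD.add_smul_sub_mem hx (hy n) ⟨by positivity, ?_⟩
  rw [← div_eq_mul_inv, div_le_one hr0]
  exact (le_max_left _ _).trans hn

lemma Convex.add_smul_mem_of_forall_mem_closure (hD_open : IsOpen D) (hD : Convex ℝ D)
    (hx : x ∈ D) (h : ∀ t : ℝ, 0 ≤ t → x + t • u ∈ closure D) {t : ℝ} (ht : 0 ≤ t) :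
    x + t • u ∈ D := by
  have hmid := hD.combo_interior_closure_mem_interior (hD_open.interior_eq.symm ▸ hx)
    (h (2 * t) (by linarith)) (a := 1 / 2) (b := 1 / 2) (by norm_num) (by norm_num) (by norm_num)
  rw [hD_open.interior_eq] at hmid
  convert hmid using 1
  module

end Convex

lemma Convex.mem_of_abs_im_lt {Ω : Set ℂ} (hΩ : Convex ℝ Ω) (hreal : ∀ t : ℝ, (t : ℂ) ∈ Ω)
    {δ : ℝ} (hball : ball (0 : ℂ) δ ⊆ Ω) {w : ℂ} (hw : |w.im| < δ) : w ∈ Ω := by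
  have hδ : 0 < δ := (abs_nonneg _).trans_lt hw
  -- `w` is a convex combination of a real point and the point `(w.im * μ) I` of the ball
  set μ := 2 * δ / (|w.im| + δ)
  have hμ1 : 1 < μ := by
    rw [lt_div_iff₀ (by positivity)]
    linarith
  have hB : ((w.im * μ : ℝ) : ℂ) * Complex.I ∈ Ω := by
    refine hball (mem_ball_zero_iff.2 ?_)
    rw [norm_mul, Complex.norm_I, mul_one, Complex.norm_real, Real.norm_eq_abs, abs_mul,
      abs_of_pos (by linarith : 0 < μ),
      show |w.im| * μ = δ * (2 * |w.im| / (|w.im| + δ)) by simp only [μ]; ring]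
    exact mul_lt_of_lt_one_right hδ ((div_lt_one (by positivity)).2 (by linarith))
  have hcomb := hΩ (hreal (w.re * μ / (μ - 1))) hB (a := 1 - μ⁻¹) (b := μ⁻¹)
    (by rw [sub_nonneg]; exact inv_le_one_of_one_le₀ hμ1.le) (by positivity) (by ring)
  convert hcomb using 1
  have : μ - 1 ≠ 0 := by linarith
  apply Complex.ext <;>
    simp only [Complex.real_smul, Complex.add_re, Complex.add_im, Complex.mul_re, Complex.mul_im,
      Complex.ofReal_re, Complex.ofReal_im, Complex.I_re, Complex.I_im] <;>
    field_simp <;> ring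

section Directions

variable {d : ℕ} {D : Set (EuclideanSpace ℂ (Fin d))} {x u v : EuclideanSpace ℂ (Fin d)}

lemma mem_directionsAtInfinity_of_tendsto (hD_open : IsOpen D) (hD_conv : Convex ℝ D)
    (hx : x ∈ D) (hu : ‖u‖ = 1) {y : ℕ → EuclideanSpace ℂ (Fin d)} {r : ℕ → ℝ}
    (hy : ∀ n, y n ∈ D) (hr : Tendsto r atTop atTop)
    (hyu : Tendsto (fun n => (r n)⁻¹ • (y n - x)) atTop (𝓝 u)) :
    u ∈ directionsAtInfinity D := by
  refine ⟨hu, x, hx, fun t ht => ?_⟩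
  exact hD_conv.add_smul_mem_of_forall_mem_closure hD_open hx
    (fun _ hs => hD_conv.add_smul_mem_closure_of_tendsto hx hy hr hyu hs) ht

lemma add_smul_mem_of_mem_directionsAtInfinity (hD_open : IsOpen D) (hD_conv : Convex ℝ D)
    (hu : u ∈ directionsAtInfinity D) (hx : x ∈ D) {t : ℝ} (ht : 0 ≤ t) : x + t • u ∈ D := by
  obtain ⟨-, x₀, hx₀, hray⟩ := hu
  have hlim : Tendsto (fun n : ℕ => ((n : ℝ))⁻¹ • (x₀ + (n : ℝ) • u - x)) atTop (𝓝 u) := by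
    have h := ((tendsto_inv_atTop_zero.comp (tendsto_natCast_atTop_atTop (R := ℝ))).smul_const
      (x₀ - x)).add_const u
    rw [zero_smul, zero_add] at h
    refine h.congr' ?_
    filter_upwards [eventually_ne_atTop 0] with n hn
    rw [Function.comp_apply, add_sub_right_comm, smul_add, smul_smul,
      inv_mul_cancel₀ (Nat.cast_ne_zero.2 hn), one_smul]
  exact hD_conv.add_smul_mem_of_forall_mem_closure hD_open hx (fun _ hs =>
    hD_conv.add_smul_mem_closure_of_tendsto hx (fun n : ℕ => hray n n.cast_nonneg)
      (tendsto_natCast_atTop_atTop (R := ℝ)) hlim hs) ht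

lemma add_smul_mem_of_mem_of_neg_mem_directionsAtInfinity (hD_open : IsOpen D)
    (hD_conv : Convex ℝ D) (hv : v ∈ directionsAtInfinity D) (hnv : -v ∈ directionsAtInfinity D)
    (hx : x ∈ D) (t : ℝ) : x + t • v ∈ D := by
  rcases le_total 0 t with ht | ht
  · exact add_smul_mem_of_mem_directionsAtInfinity hD_open hD_conv hv hx ht
  · simpa using add_smul_mem_of_mem_directionsAtInfinity hD_open hD_conv hnv hx (neg_nonneg.2 ht)

lemma exists_mem_directionsAtInfinity_of_not_isBounded (hD_open : IsOpen D)
    (hD_conv : Convex ℝ D) (hx : x ∈ D) (W : Submodule ℝ (EuclideanSpace ℂ (Fin d)))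
    (hW : ¬ Bornology.IsBounded {w ∈ D | w - x ∈ W}) : ∃ u ∈ directionsAtInfinity D, u ∈ W := by
  have hfar : ∀ n : ℕ, ∃ w ∈ D, w - x ∈ W ∧ (n : ℝ) < ‖w - x‖ := fun n => by
    rw [isBounded_iff_subset_closedBall x] at hW
    obtain ⟨w, ⟨hwD, hwW⟩, hw⟩ := not_subset.1 (not_exists.1 hW n)
    exact ⟨w, hwD, hwW, by simpa [dist_eq_norm] using hw⟩
  choose w hwD hwW hw using hfar
  have hpos : ∀ n, 0 < ‖w n - x‖ := fun n => (Nat.cast_nonneg n).trans_lt (hw n)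
  have hK : IsCompact (sphere 0 1 ∩ (W : Set (EuclideanSpace ℂ (Fin d)))) :=
    (isCompact_sphere 0 1).inter_right W.closed_of_finiteDimensional
  obtain ⟨u, ⟨hu, huW⟩, φ, hφ, hlim⟩ := hK.tendsto_subseq (x := fun n => ‖w n - x‖⁻¹ • (w n - x))
    fun n => ⟨by simp [norm_smul, (hpos n).ne'], W.smul_mem _ (hwW n)⟩
  refine ⟨u, mem_directionsAtInfinity_of_tendsto hD_open hD_conv hx
    (mem_sphere_zero_iff_norm.1 hu) (fun n => hwD (φ n)) ?_ hlim, huW⟩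
  refine tendsto_atTop_mono (fun n => ?_) tendsto_natCast_atTop_atTop
  exact (Nat.cast_le.2 (hφ.id_le n)).trans (hw (φ n)).le

lemma inner_add_real_smul (hv : ‖v‖ = 1) (z : EuclideanSpace ℂ (Fin d)) (t : ℝ) :
    inner ℂ v (z + t • v) = inner ℂ v z + t := by
  rw [inner_add_right, ← Complex.coe_smul, inner_smul_right, inner_self_eq_norm_sq_to_K, hv]
  simp

lemma exists_abs_im_inner_lt (hD_open : IsOpen D) (hD_conv : Convex ℝ D) (hx : x ∈ D)
    (hv : ‖v‖ = 1) (hdir : directionsAtInfinity D ⊆ {v, -v})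
    (hline : ∀ z ∈ D, ∀ t : ℝ, z + t • v ∈ D) :
    ∃ M, ∀ z ∈ D, |(inner ℂ v z).im| < M := by
  set W : Submodule ℝ (EuclideanSpace ℂ (Fin d)) :=
    LinearMap.ker (Complex.reLm.comp ((innerSL ℂ v).toLinearMap.restrictScalars ℝ))
  have hW : ∀ w, w ∈ W ↔ (inner ℂ v w).re = 0 := fun w => by simp [W]
  -- a direction at infinity in `W` would be `± v`, whose inner product with `v` is `± 1`
  have hbdd : Bornology.IsBounded {w ∈ D | w - x ∈ W} := by
    by_contra h
    obtain ⟨u, hu, huW⟩ := exists_mem_directionsAtInfinity_of_not_isBounded hD_open hD_conv hx W h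
    rw [hW] at huW
    rcases hdir hu with rfl | rfl <;> simp [inner_self_eq_norm_sq_to_K, hv] at huW
  obtain ⟨R, hR⟩ := (isBounded_iff_subset_closedBall x).1 hbdd
  refine ⟨R + |(inner ℂ v x).im| + 1, fun z hz => ?_⟩
  set w := z + (-(inner ℂ v (z - x)).re) • v
  have hwx : inner ℂ v (w - x) = inner ℂ v (z - x) - (inner ℂ v (z - x)).re := by
    rw [add_sub_right_comm, inner_add_real_smul hv]
    push_cast
    ring
  have hw : w ∈ {w ∈ D | w - x ∈ W} := ⟨hline z hz _, by rw [hW, hwx]; simp⟩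
  calc |(inner ℂ v z).im| = |(inner ℂ v (w - x)).im + (inner ℂ v x).im| := by
        rw [hwx, inner_sub_right]
        simp
    _ ≤ |(inner ℂ v (w - x)).im| + |(inner ℂ v x).im| := abs_add_le _ _
    _ ≤ ‖w - x‖ + |(inner ℂ v x).im| := by
        gcongr
        calc |(inner ℂ v (w - x)).im| ≤ ‖inner ℂ v (w - x)‖ := Complex.abs_im_le_norm _
          _ ≤ ‖v‖ * ‖w - x‖ := norm_inner_le_norm _ _
          _ = ‖w - x‖ := by rw [hv, one_mul]
    _ ≤ R + |(inner ℂ v x).im| := by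
        gcongr
        simpa [dist_eq_norm] using hR hw
    _ < R + |(inner ℂ v x).im| + 1 := lt_add_one _

lemma exists_forall_abs_im_lt_add_smul_mem (hD_open : IsOpen D) (hD_conv : Convex ℝ D)
    (hx : x ∈ D) (hline : ∀ t : ℝ, x + t • v ∈ D) :
    ∃ δ > 0, ∀ w : ℂ, |w.im| < δ → x + w • v ∈ D := by
  set Ω := (fun w : ℂ => x + w • v) ⁻¹' D
  have hΩ_conv : Convex ℝ Ω := (hD_conv.translate_preimage_right x).linear_preimage
    ((LinearMap.toSpanSingleton ℂ _ v).restrictScalars ℝ)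
  obtain ⟨δ, hδ, hball⟩ := Metric.isOpen_iff.1 (hD_open.preimage (by fun_prop) : IsOpen Ω) 0
    (by simpa [Ω] using hx)
  exact ⟨δ, hδ, fun w hw => hΩ_conv.mem_of_abs_im_lt
    (fun t => by simpa [Ω, Complex.coe_smul] using hline t) hball hw⟩

end Directions

section StripMap

variable {ζ : ℂ}

lemma one_sub_ne_zero_of_norm_lt_one (hζ : ‖ζ‖ < 1) : 1 - ζ ≠ 0 :=
  sub_ne_zero.2 fun h => by simp [← h] at hζ

lemma re_one_add_div_one_sub_pos (hζ : ‖ζ‖ < 1) : 0 < ((1 + ζ) / (1 - ζ)).re := by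
  have hsq : ζ.re * ζ.re + ζ.im * ζ.im < 1 := by
    rw [← Complex.normSq_apply, ← Complex.sq_norm]
    nlinarith [norm_nonneg ζ]
  rw [Complex.div_re, ← add_div]
  refine div_pos ?_ (Complex.normSq_pos.2 (one_sub_ne_zero_of_norm_lt_one hζ))
  simp only [Complex.add_re, Complex.add_im, Complex.sub_re, Complex.sub_im, Complex.one_re,
    Complex.one_im]
  nlinarith

lemma differentiableOn_log_one_add_div_one_sub :
    DifferentiableOn ℂ (fun ζ : ℂ => Complex.log ((1 + ζ) / (1 - ζ))) (ball 0 1) := by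
  intro ζ hζ
  have hζ' := mem_ball_zero_iff.1 hζ
  refine DifferentiableAt.differentiableWithinAt (DifferentiableAt.clog ?_ ?_)
  · exact DifferentiableAt.div (by fun_prop) (by fun_prop) (one_sub_ne_zero_of_norm_lt_one hζ')
  · exact Complex.mem_slitPlane_iff.2 (Or.inl (re_one_add_div_one_sub_pos hζ'))

lemma abs_im_log_one_add_div_one_sub_lt (hζ : ‖ζ‖ < 1) :
    |(Complex.log ((1 + ζ) / (1 - ζ))).im| < Real.pi / 2 := by
  rw [Complex.log_im]
  exact Complex.abs_arg_lt_pi_div_two_iff.2 (Or.inl (re_one_add_div_one_sub_pos hζ))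

lemma exists_log_one_add_div_one_sub_eq {T : ℝ} (hT : 0 ≤ T) :
    ∃ r ∈ ball (0 : ℂ) 1, Complex.log ((1 + r) / (1 - r)) = T ∧ poincareDist 0 r = T / 2 := by
  have hc : 1 ≤ Real.exp T := Real.one_le_exp hT
  set r : ℝ := (Real.exp T - 1) / (Real.exp T + 1)
  have hr0 : 0 ≤ r := div_nonneg (by linarith) (by linarith)
  have hr1 : r < 1 := (div_lt_one (by linarith)).2 (by linarith)
  have hq : (1 + r) / (1 - r) = Real.exp T := by
    have : 1 - r ≠ 0 := by linarith
    rw [div_eq_iff this]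
    simp only [r]
    field_simp
    ring
  refine ⟨r, by simpa [abs_of_nonneg hr0] using hr1, ?_, ?_⟩
  · rw [← Complex.ofReal_one, ← Complex.ofReal_add, ← Complex.ofReal_sub, ← Complex.ofReal_div,
      hq, ← Complex.ofReal_log (Real.exp_pos T).le, Real.log_exp]
  · rw [poincareDist, artanh, map_zero, zero_mul, sub_zero, div_one, zero_sub, norm_neg,
      Complex.norm_real, Real.norm_eq_abs, abs_of_nonneg hr0, hq, Real.log_exp]

end StripMap

lemma exists_disc_through_add_smul {d : ℕ} {D : Set (EuclideanSpace ℂ (Fin d))}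
    {x v : EuclideanSpace ℂ (Fin d)} {δ : ℝ} (hδ : 0 < δ)
    (hstrip : ∀ w : ℂ, |w.im| < δ → x + w • v ∈ D) {s t : ℝ} (hst : s ≤ t) :
    ∃ f : ℂ → EuclideanSpace ℂ (Fin d), ∃ r ∈ ball (0 : ℂ) 1, DifferentiableOn ℂ f (ball 0 1) ∧
      MapsTo f (ball 0 1) D ∧ f 0 = x + s • v ∧ f r = x + t • v ∧
      poincareDist 0 r = Real.pi / (4 * δ) * (t - s) := by
  set κ := 2 * δ / Real.pi
  have hκ : 0 < κ := by positivity
  obtain ⟨r, hr, hlog, hρ⟩ :=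
    exists_log_one_add_div_one_sub_eq (T := (t - s) / κ) (div_nonneg (by linarith) hκ.le)
  refine ⟨fun ζ => x + ((s : ℂ) + κ * Complex.log ((1 + ζ) / (1 - ζ))) • v, r, hr,
    (((differentiableOn_log_one_add_div_one_sub.const_mul _).const_add _).smul_const _).const_add _,
    fun ζ hζ => hstrip _ ?_, ?_, ?_, ?_⟩
  · rw [Complex.add_im, Complex.ofReal_im, zero_add, Complex.im_ofReal_mul, abs_mul,
      abs_of_pos hκ]
    calc κ * |(Complex.log ((1 + ζ) / (1 - ζ))).im| < κ * (Real.pi / 2) :=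
          mul_lt_mul_of_pos_left (abs_im_log_one_add_div_one_sub_lt (mem_ball_zero_iff.1 hζ)) hκ
      _ = δ := by simp only [κ]; field_simp
  · simp [Complex.coe_smul]
  · beta_reduce
    rw [hlog, ← Complex.ofReal_mul, mul_div_cancel₀ _ hκ.ne', ← Complex.ofReal_add,
      add_sub_cancel, Complex.coe_smul]
  · rw [hρ]
    simp only [κ]
    field_simp
    ring

theorem line_is_quasi_geodesic_general {d : ℕ} (D : Set (EuclideanSpace ℂ (Fin d)))
    (hD_open : IsOpen D) (hD_conv : Convex ℝ D)
    (v : EuclideanSpace ℂ (Fin d))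
    (hdir : directionsAtInfinity D = {v, -v}) :
    ∀ z₀ ∈ D, ∃ A : ℝ, 1 ≤ A ∧ ∀ a b : ℝ, a ≤ b →
      (1 / A) * (b - a) ≤ kobayashiDist D (z₀ + a • v) (z₀ + b • v) ∧
      kobayashiDist D (z₀ + a • v) (z₀ + b • v) ≤ A * (b - a) := by
  intro z₀ hz₀
  have hv : v ∈ directionsAtInfinity D := hdir ▸ mem_insert _ _
  have hline : ∀ z ∈ D, ∀ t : ℝ, z + t • v ∈ D := fun _ =>
    add_smul_mem_of_mem_of_neg_mem_directionsAtInfinity hD_open hD_conv hv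
      (hdir ▸ mem_insert_of_mem _ rfl)
  obtain ⟨M, hM⟩ := exists_abs_im_inner_lt hD_open hD_conv hz₀ hv.1 hdir.subset hline
  obtain ⟨δ, hδ, hstrip⟩ :=
    exists_forall_abs_im_lt_add_smul_mem hD_open hD_conv hz₀ (hline z₀ hz₀)
  have hM0 : 0 < M := (abs_nonneg _).trans_lt (hM z₀ hz₀)
  refine ⟨max (max (Real.pi / (4 * δ)) (4 * M / Real.pi)) 1, le_max_right _ _,
    fun a b hab => ?_⟩
  obtain ⟨f, r, hr, hf, hfD, hf0, hfr, hρ⟩ := exists_disc_through_add_smul hδ hstrip hab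
  have hlow := mul_abs_re_sub_le_kobayashiDist (innerSL ℂ v) hM hf hfD (mem_ball_self one_pos) hr
  have hup := kobayashiDist_le_poincareDist hf hfD (mem_ball_self one_pos) hr
  simp only [innerSL_apply_apply, hf0, hfr, inner_add_real_smul hv.1, Complex.add_re,
    Complex.ofReal_re, add_sub_add_left_eq_sub, abs_of_nonneg (sub_nonneg.2 hab)] at hlow
  rw [hf0, hfr, hρ] at hup
  constructor
  · refine le_trans (mul_le_mul_of_nonneg_right ?_ (sub_nonneg.2 hab)) hlow
    rw [one_div_le (by positivity) (by positivity), one_div_div]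
    exact (le_max_right _ _).trans (le_max_left _ _)
  · exact hup.trans (mul_le_mul_of_nonneg_right ((le_max_left _ _).trans (le_max_left _ _))
      (sub_nonneg.2 hab))

/-- If `D ⊆ ℂ^d` is a convex domain whose set of (real) directions at
infinity is exactly `{v, −v}` for a unit vector `v`, then for every `z₀ ∈ D` the curve
`t ↦ z₀ + t • v` is an `(A,0)`-quasi-geodesic for the Kobayashi distance, for some `A ≥ 1`:
`(1/A)(b − a) ≤ K_D(z₀ + a•v, z₀ + b•v) ≤ A(b − a)` for all reals `a ≤ b`. -/
theorem line_is_quasi_geodesic {d : ℕ} (D : Set (EuclideanSpace ℂ (Fin d)))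
    (hD_open : IsOpen D) (hD_conn : IsConnected D) (hD_conv : Convex ℝ D)
    (v : EuclideanSpace ℂ (Fin d)) (hv : ‖v‖ = 1)
    (hdir : directionsAtInfinity D = {v, -v}) :
    ∀ z₀ ∈ D, ∃ A : ℝ, 1 ≤ A ∧ ∀ a b : ℝ, a ≤ b →
      (1 / A) * (b - a) ≤ kobayashiDist D (z₀ + a • v) (z₀ + b • v) ∧
      kobayashiDist D (z₀ + a • v) (z₀ + b • v) ≤ A * (b - a) :=
  line_is_quasi_geodesic_general D hD_open hD_conv v hdir

end
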